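/- Let ψ_1, …, ψ_K be orthonormal vectors in ℝ^N and let w ∈ ℝ^N have i.i.d. entries with zero mean and zero median, μ = E[|w_1|] and σ² = E[w_1²] < ∞. Define Z_K = Σ_{k=1}^K sign(w)^T ψ_k (ψ_k^T w). Then for every δ > 0, P(|Z_K/K − μ| ≤ δ) ≥ 1 − (σ² + μ²)/(K δ²); consequently the semi-white box distortion Δ_SW = ε|Z_K| satisfies P(|Δ_SW/K − εμ| ≤ εδ) ≥ 1 − (σ² + μ²)/(K δ²). -/

import Mathlib

open MeasureTheory ProbabilityTheory
open scoped ProbabilityTheory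

section Stmt4Aux

lemma sign_measurable' : Measurable Real.sign := by
  unfold Real.sign
  exact Measurable.ite (measurableSet_lt measurable_id measurable_const) measurable_const
    (Measurable.ite (measurableSet_lt measurable_const measurable_id) measurable_const
      measurable_const)

lemma abs_sign_le_one' (x : ℝ) : |Real.sign x| ≤ 1 := by
  rcases Real.sign_apply_eq x with h | h | h <;> rw [h] <;> norm_num

lemma sign_mul_self' (x : ℝ) : Real.sign x * x = |x| := by
  rcases lt_trichotomy x 0 with h | h | h
  · rw [Real.sign_of_neg h, abs_of_neg h]; ring
  · simp [h]
  · rw [Real.sign_of_pos h, abs_of_pos h]; ring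

lemma sign_sq_mul_self' (x : ℝ) : Real.sign x ^ 2 * x = x := by
  rcases lt_trichotomy x 0 with h | h | h
  · rw [Real.sign_of_neg h]; ring
  · simp [h]
  · rw [Real.sign_of_pos h]; ring

lemma sign_sq_mul_sq' (x : ℝ) : Real.sign x ^ 2 * x ^ 2 = x ^ 2 := by
  rcases lt_trichotomy x 0 with h | h | h
  · rw [Real.sign_of_neg h]; ring
  · simp [h]
  · rw [Real.sign_of_pos h]; ring

lemma sign_sq_le_one' (x : ℝ) : Real.sign x ^ 2 ≤ 1 := by
  rcases Real.sign_apply_eq x with h | h | h <;> rw [h] <;> norm_num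

/-- Kronecker delta as a real number. -/
noncomputable def dd {N : ℕ} (a b : Fin N) : ℝ := if a = b then 1 else 0

lemma collapse1 {N : ℕ} (P : Fin N → Fin N → ℝ) (c1 : ℝ) :
    ∑ m, ∑ n, ∑ m', ∑ n', (P m n * P m' n') * (c1 * dd m n * dd m m' * dd m' n')
      = c1 * ∑ m, P m m ^ 2 := by
  simp [dd, mul_ite, ite_mul, mul_zero, zero_mul, mul_one, one_mul, Finset.mul_sum]
  exact Finset.sum_congr rfl fun x _ => by ring

lemma collapse2 {N : ℕ} (P : Fin N → Fin N → ℝ) (c2 : ℝ) :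
    ∑ m, ∑ n, ∑ m', ∑ n', (P m n * P m' n') * (c2 * (dd m n * dd m' n' * (1 - dd m m')))
      = c2 * ((∑ m, P m m) ^ 2 - ∑ m, P m m ^ 2) := by
  simp [dd, mul_ite, ite_mul, mul_zero, zero_mul, mul_one, one_mul, mul_sub, sub_mul,
    Finset.sum_sub_distrib, Finset.mul_sum]
  rw [sq, Fintype.sum_mul_sum, Finset.mul_sum]
  congr 1
  · refine Finset.sum_congr rfl fun x _ => ?_
    rw [Finset.mul_sum]
    exact Finset.sum_congr rfl fun y _ => by ring
  · exact Finset.sum_congr rfl fun x _ => by ring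

lemma collapse3 {N : ℕ} (P : Fin N → Fin N → ℝ) (c3 : ℝ) :
    ∑ m, ∑ n, ∑ m', ∑ n', (P m n * P m' n') * (c3 * (dd m m' * dd n n' * (1 - dd m n)))
      = c3 * ((∑ m, ∑ n, P m n ^ 2) - ∑ m, P m m ^ 2) := by
  simp [dd, mul_ite, ite_mul, mul_zero, zero_mul, mul_one, one_mul, mul_sub, sub_mul,
    Finset.sum_sub_distrib, Finset.mul_sum]
  congr 1
  · exact Finset.sum_congr rfl fun x _ => Finset.sum_congr rfl fun y _ => by ring
  · exact Finset.sum_congr rfl fun x _ => by ring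

lemma collapse4 {N : ℕ} (P : Fin N → Fin N → ℝ) (c4 : ℝ) :
    ∑ m, ∑ n, ∑ m', ∑ n', (P m n * P m' n') * (c4 * (dd m n' * dd n m' * (1 - dd m n)))
      = c4 * ((∑ m, ∑ n, P m n * P n m) - ∑ m, P m m ^ 2) := by
  simp [dd, mul_ite, ite_mul, mul_zero, zero_mul, mul_one, one_mul, mul_sub, sub_mul,
    Finset.sum_sub_distrib, Finset.mul_sum]
  congr 1
  · exact Finset.sum_congr rfl fun x _ => Finset.sum_congr rfl fun y _ => by ring
  · exact Finset.sum_congr rfl fun x _ => by ring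

lemma sq_double_sum {N : ℕ} (a : Fin N → Fin N → ℝ) :
    (∑ m, ∑ n, a m n) ^ 2 = ∑ m, ∑ n, ∑ m', ∑ n', a m n * a m' n' := by
  rw [sq, Fintype.sum_mul_sum]
  refine Finset.sum_congr rfl fun m _ => ?_
  rw [Finset.sum_comm]
  refine Finset.sum_congr rfl fun n _ => ?_
  simp_rw [Fintype.sum_mul_sum]

lemma zk_reshape {N K : ℕ} (ψ : Fin K → Fin N → ℝ) (s v : Fin N → ℝ) :
    ∑ k, (∑ m, s m * ψ k m) * (∑ n, ψ k n * v n)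
      = ∑ m, ∑ n, (∑ k, ψ k m * ψ k n) * (s m * v n) := by
  simp_rw [Fintype.sum_mul_sum]
  rw [Finset.sum_comm]
  refine Finset.sum_congr rfl fun m _ => ?_
  rw [Finset.sum_comm]
  refine Finset.sum_congr rfl fun n _ => ?_
  rw [Finset.sum_mul]
  refine Finset.sum_congr rfl fun k _ => by ring

/-- the projector matrix -/
noncomputable def Pmat {N K : ℕ} (ψ : Fin K → Fin N → ℝ) (a b : Fin N) : ℝ :=
  ∑ k, ψ k a * ψ k b

lemma Pmat_symm {N K : ℕ} (ψ : Fin K → Fin N → ℝ) (a b : Fin N) :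
    Pmat ψ a b = Pmat ψ b a :=
  Finset.sum_congr rfl fun k _ => by ring

lemma Pmat_trace {N K : ℕ} (ψ : Fin K → Fin N → ℝ)
    (horth : ∀ i j, ∑ m, ψ i m * ψ j m = if i = j then (1 : ℝ) else 0) :
    ∑ m, Pmat ψ m m = K := by
  unfold Pmat
  rw [Finset.sum_comm]
  simp only [horth]
  simp

lemma Pmat_proj {N K : ℕ} (ψ : Fin K → Fin N → ℝ)
    (horth : ∀ i j, ∑ m, ψ i m * ψ j m = if i = j then (1 : ℝ) else 0) (m l : Fin N) :
    ∑ n, Pmat ψ m n * Pmat ψ n l = Pmat ψ m l := by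
  unfold Pmat
  simp_rw [Fintype.sum_mul_sum]
  rw [Finset.sum_comm]
  have : ∀ k : Fin K, ∑ n, ∑ k', (ψ k m * ψ k n) * (ψ k' n * ψ k' l)
      = ∑ k', (ψ k m * ψ k' l) * ∑ n, ψ k n * ψ k' n := by
    intro k
    rw [Finset.sum_comm]
    refine Finset.sum_congr rfl fun k' _ => ?_
    rw [Finset.mul_sum]
    exact Finset.sum_congr rfl fun n _ => by ring
  simp_rw [this, horth]
  simp

lemma Pmat_diag_nonneg {N K : ℕ} (ψ : Fin K → Fin N → ℝ) (m : Fin N) :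
    0 ≤ Pmat ψ m m :=
  Finset.sum_nonneg fun k _ => mul_self_nonneg _

lemma Pmat_diag_le_one {N K : ℕ} (ψ : Fin K → Fin N → ℝ)
    (horth : ∀ i j, ∑ m, ψ i m * ψ j m = if i = j then (1 : ℝ) else 0) (m : Fin N) :
    Pmat ψ m m ≤ 1 := by
  have key : 0 ≤ ∑ n, ((if m = n then (1:ℝ) else 0) - Pmat ψ m n) ^ 2 :=
    Finset.sum_nonneg fun n _ => sq_nonneg _
  have expand : ∑ n, ((if m = n then (1:ℝ) else 0) - Pmat ψ m n) ^ 2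
      = (∑ n, (if m = n then (1:ℝ) else 0)) - 2 * Pmat ψ m m
        + ∑ n, Pmat ψ m n * Pmat ψ n m := by
    have hterm : ∀ n, ((if m = n then (1:ℝ) else 0) - Pmat ψ m n) ^ 2
        = (if m = n then (1:ℝ) else 0) - 2 * ((if m = n then (1:ℝ) else 0) * Pmat ψ m n)
          + Pmat ψ m n * Pmat ψ n m := by
      intro n
      rw [Pmat_symm ψ n m]
      by_cases h : m = n <;> simp [h] <;> ring
    rw [Finset.sum_congr rfl fun n _ => hterm n, Finset.sum_add_distrib,
      Finset.sum_sub_distrib]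
    congr 2
    rw [← Finset.mul_sum]
    congr 1
    simp
  rw [expand, Pmat_proj ψ horth m m] at key
  simp at key
  linarith

variable {Ω : Type*} [MeasureSpace Ω] [IsProbabilityMeasure (ℙ : Measure Ω)]

lemma prod_indep_integral {ι : Type*} [DecidableEq ι] (X : ι → Ω → ℝ)
    (hindep : iIndepFun X ℙ)
    (hmeas : ∀ i, Measurable (X i)) (hint : ∀ i, Integrable (X i) ℙ)
    (s : Finset ι) :
    Integrable (fun ω => ∏ i ∈ s, X i ω) ℙ ∧
      ∫ ω, ∏ i ∈ s, X i ω = ∏ i ∈ s, ∫ ω, X i ω := by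
  classical
  induction s using Finset.induction with
  | empty => simp
  | @insert a s ha ih =>
    have hIF : IndepFun (fun ω => ∏ i ∈ s, X i ω) (X a) ℙ := by
      have h := hindep.indepFun_finsetProd_of_notMem hmeas ha
      have : (∏ j ∈ s, X j) = fun ω => ∏ i ∈ s, X i ω := by
        funext ω; simp [Finset.prod_apply]
      rwa [this] at h
    have hint' : Integrable (fun ω => ∏ i ∈ s, X i ω) ℙ := ih.1
    have hmul : Integrable (fun ω => X a ω * ∏ i ∈ s, X i ω) ℙ := by
      have := (hIF.symm.integrable_mul (hint a) hint')
      exact this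
    constructor
    · simpa [Finset.prod_insert ha] using hmul
    · rw [show (fun ω => ∏ i ∈ insert a s, X i ω) = fun ω => X a ω * ∏ i ∈ s, X i ω by
        funext ω; exact Finset.prod_insert ha]
      have := hIF.symm.integral_mul_eq_mul_integral (hint a).aestronglyMeasurable hint'.aestronglyMeasurable
      have heq : (X a * fun ω => ∏ i ∈ s, X i ω) = fun ω => X a ω * ∏ i ∈ s, X i ω := rfl
      rw [heq] at this
      rw [this, ih.2, Finset.prod_insert ha]

variable {N : ℕ} {w : Ω → Fin N → ℝ}

lemma int2' (hindep : iIndepFun (fun i ω => w ω i) ℙ)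
    {i j : Fin N} (hij : i ≠ j) {f g : ℝ → ℝ} (hf : Measurable f) (hg : Measurable g)
    (hfi : Integrable (fun ω => f (w ω i)) ℙ) (hgj : Integrable (fun ω => g (w ω j)) ℙ) :
    ∫ ω, f (w ω i) * g (w ω j) = (∫ ω, f (w ω i)) * ∫ ω, g (w ω j) := by
  have h := (hindep.indepFun hij).comp hf hg
  exact h.integral_mul_eq_mul_integral hfi.aestronglyMeasurable hgj.aestronglyMeasurable

lemma int3' (hmeas : ∀ i, Measurable fun ω => w ω i)
    (hindep : iIndepFun (fun i ω => w ω i) ℙ)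
    {i j k : Fin N} (hij : i ≠ j) (hik : i ≠ k) (hjk : j ≠ k)
    {f g h : ℝ → ℝ} (hf : Measurable f) (hg : Measurable g) (hh : Measurable h)
    (hfi : Integrable (fun ω => f (w ω i)) ℙ) (hgj : Integrable (fun ω => g (w ω j)) ℙ)
    (hhk : Integrable (fun ω => h (w ω k)) ℙ) :
    ∫ ω, f (w ω i) * g (w ω j) * h (w ω k)
      = (∫ ω, f (w ω i)) * (∫ ω, g (w ω j)) * ∫ ω, h (w ω k) := by
  classical
  set F : Fin N → ℝ → ℝ := fun a =>
    if a = i then f else if a = j then g else if a = k then h else fun _ => (1:ℝ) with hF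
  have hFmeas : ∀ a, Measurable (F a) := by
    intro a; simp only [hF]; split_ifs <;> first | assumption | exact measurable_const
  have hXindep : iIndepFun (fun a ω => F a (w ω a)) ℙ :=
    hindep.comp F hFmeas
  have hXmeas : ∀ a, Measurable (fun ω => F a (w ω a)) := fun a => (hFmeas a).comp (hmeas a)
  have hXint : ∀ a, Integrable (fun ω => F a (w ω a)) ℙ := by
    intro a
    by_cases h1 : a = i
    · subst h1; simpa [hF] using hfi
    by_cases h2 : a = j
    · subst h2; simpa [hF, h1] using hgj
    by_cases h3 : a = k
    · subst h3; simpa [hF, h1, h2] using hhk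
    · simpa [hF, h1, h2, h3] using (integrable_const (1:ℝ))
  have key := prod_indep_integral _ hXindep hXmeas hXint {i, j, k}
  have hij' : i ∉ ({j, k} : Finset (Fin N)) := by simp [hij, hik]
  have hjk' : j ∉ ({k} : Finset (Fin N)) := by simp [hjk]
  have hexp : ∀ G : Fin N → ℝ, ∏ a ∈ ({i, j, k} : Finset (Fin N)), G a = G i * G j * G k := by
    intro G
    rw [show ({i, j, k} : Finset (Fin N)) = insert i (insert j {k}) from rfl,
      Finset.prod_insert hij', Finset.prod_insert hjk', Finset.prod_singleton]
    ring
  have hFi : ∀ x, F i x = f x := by intro x; simp [hF]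
  have hFj : ∀ x, F j x = g x := by intro x; simp [hF, Ne.symm hij]
  have hFk : ∀ x, F k x = h x := by intro x; simp [hF, Ne.symm hik, Ne.symm hjk]
  have := key.2
  simp only [hexp, hFi, hFj, hFk] at this
  exact this

lemma int4' (hmeas : ∀ i, Measurable fun ω => w ω i)
    (hindep : iIndepFun (fun i ω => w ω i) ℙ)
    {i j k l : Fin N} (hij : i ≠ j) (hik : i ≠ k) (hil : i ≠ l) (hjk : j ≠ k)
    (hjl : j ≠ l) (hkl : k ≠ l)
    {f g h e : ℝ → ℝ} (hf : Measurable f) (hg : Measurable g) (hh : Measurable h)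
    (he : Measurable e)
    (hfi : Integrable (fun ω => f (w ω i)) ℙ) (hgj : Integrable (fun ω => g (w ω j)) ℙ)
    (hhk : Integrable (fun ω => h (w ω k)) ℙ) (hel : Integrable (fun ω => e (w ω l)) ℙ) :
    ∫ ω, f (w ω i) * g (w ω j) * h (w ω k) * e (w ω l)
      = (∫ ω, f (w ω i)) * (∫ ω, g (w ω j)) * (∫ ω, h (w ω k)) * ∫ ω, e (w ω l) := by
  classical
  set F : Fin N → ℝ → ℝ := fun a =>
    if a = i then f else if a = j then g else if a = k then h else if a = l then e
      else fun _ => (1:ℝ) with hF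
  have hFmeas : ∀ a, Measurable (F a) := by
    intro a; simp only [hF]; split_ifs <;> first | assumption | exact measurable_const
  have hXindep : iIndepFun (fun a ω => F a (w ω a)) ℙ :=
    hindep.comp F hFmeas
  have hXmeas : ∀ a, Measurable (fun ω => F a (w ω a)) := fun a => (hFmeas a).comp (hmeas a)
  have hXint : ∀ a, Integrable (fun ω => F a (w ω a)) ℙ := by
    intro a
    by_cases h1 : a = i
    · subst h1; simpa [hF] using hfi
    by_cases h2 : a = j
    · subst h2; simpa [hF, h1] using hgj
    by_cases h3 : a = k
    · subst h3; simpa [hF, h1, h2] using hhk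
    by_cases h4 : a = l
    · subst h4; simpa [hF, h1, h2, h3] using hel
    · simpa [hF, h1, h2, h3, h4] using (integrable_const (1:ℝ))
  have key := prod_indep_integral _ hXindep hXmeas hXint {i, j, k, l}
  have hi' : i ∉ ({j, k, l} : Finset (Fin N)) := by simp [hij, hik, hil]
  have hj' : j ∉ ({k, l} : Finset (Fin N)) := by simp [hjk, hjl]
  have hk' : k ∉ ({l} : Finset (Fin N)) := by simp [hkl]
  have hexp : ∀ G : Fin N → ℝ,
      ∏ a ∈ ({i, j, k, l} : Finset (Fin N)), G a = G i * G j * G k * G l := by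
    intro G
    rw [show ({i, j, k, l} : Finset (Fin N)) = insert i (insert j (insert k {l})) from rfl,
      Finset.prod_insert hi', Finset.prod_insert hj', Finset.prod_insert hk',
      Finset.prod_singleton]
    ring
  have hFi : ∀ x, F i x = f x := by intro x; simp [hF]
  have hFj : ∀ x, F j x = g x := by intro x; simp [hF, Ne.symm hij]
  have hFk : ∀ x, F k x = h x := by intro x; simp [hF, Ne.symm hik, Ne.symm hjk]
  have hFl : ∀ x, F l x = e x := by intro x; simp [hF, Ne.symm hil, Ne.symm hjl, Ne.symm hkl]
  have := key.2
  simp only [hexp, hFi, hFj, hFk, hFl] at this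
  exact this

end Stmt4Aux

section CrossMoment

variable {Ω : Type*} [MeasureSpace Ω] [IsProbabilityMeasure (ℙ : Measure Ω)]
variable {N : ℕ} {w : Ω → Fin N → ℝ}

lemma cross_moment (hmeas : ∀ i, Measurable fun ω => w ω i)
    (hindep : iIndepFun (fun i ω => w ω i) ℙ)
    (μ s2 q ν : ℝ)
    (Esg : ∀ i, ∫ ω, Real.sign (w ω i) = 0)
    (Ew : ∀ i, ∫ ω, w ω i = 0)
    (Esw : ∀ i, ∫ ω, Real.sign (w ω i) * w ω i = μ)
    (Ew2 : ∀ i, ∫ ω, (w ω i) ^ 2 = s2)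
    (Es2w : ∀ i, ∫ ω, Real.sign (w ω i) ^ 2 * w ω i = 0)
    (Es2 : ∀ i, ∫ ω, Real.sign (w ω i) ^ 2 = q)
    (Es2w2 : ∀ i, ∫ ω, Real.sign (w ω i) ^ 2 * (w ω i) ^ 2 = s2)
    (Esw2 : ∀ i, ∫ ω, Real.sign (w ω i) * (w ω i) ^ 2 = ν)
    (Isg : ∀ i, Integrable (fun ω => Real.sign (w ω i)) ℙ)
    (Iw : ∀ i, Integrable (fun ω => w ω i) ℙ)
    (Isw : ∀ i, Integrable (fun ω => Real.sign (w ω i) * w ω i) ℙ)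
    (Iw2 : ∀ i, Integrable (fun ω => (w ω i) ^ 2) ℙ)
    (Is2w : ∀ i, Integrable (fun ω => Real.sign (w ω i) ^ 2 * w ω i) ℙ)
    (Is2 : ∀ i, Integrable (fun ω => Real.sign (w ω i) ^ 2) ℙ)
    (Isw2 : ∀ i, Integrable (fun ω => Real.sign (w ω i) * (w ω i) ^ 2) ℙ)
    (m n m' n' : Fin N) :
    ∫ ω, (Real.sign (w ω m) * w ω n) * (Real.sign (w ω m') * w ω n')
      = s2 * dd m n * dd m m' * dd m' n'
        + μ ^ 2 * (dd m n * dd m' n' * (1 - dd m m'))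
        + q * s2 * (dd m m' * dd n n' * (1 - dd m n))
        + μ ^ 2 * (dd m n' * dd n m' * (1 - dd m n)) := by
  have msg : Measurable Real.sign := sign_measurable'
  have msgx : Measurable fun x : ℝ => Real.sign x * x := msg.mul measurable_id
  have msg2 : Measurable fun x : ℝ => Real.sign x ^ 2 := msg.pow_const 2
  have msg2x : Measurable fun x : ℝ => Real.sign x ^ 2 * x := msg2.mul measurable_id
  have msgx2 : Measurable fun x : ℝ => Real.sign x * x ^ 2 := msg.mul (measurable_id.pow_const 2)
  have msq : Measurable fun x : ℝ => x ^ 2 := measurable_id.pow_const 2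
  have mid : Measurable fun x : ℝ => x := measurable_id
  by_cases h1 : m = n
  · subst h1
    by_cases h2 : m' = n'
    · subst h2
      by_cases h3 : m' = m
      · subst h3
        rw [show (fun ω => (Real.sign (w ω m') * w ω m') * (Real.sign (w ω m') * w ω m'))
            = fun ω => Real.sign (w ω m') ^ 2 * (w ω m') ^ 2 from funext fun ω => by ring,
          Es2w2 m']
        simp [dd]
      · have key : ∫ ω, (Real.sign (w ω m) * w ω m) * (Real.sign (w ω m') * w ω m')
            = (∫ ω, Real.sign (w ω m) * w ω m) * ∫ ω, Real.sign (w ω m') * w ω m' :=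
          int2' hindep (Ne.symm h3) msgx msgx (Isw m) (Isw m')
        rw [key, Esw m, Esw m']
        simp [dd, h3, Ne.symm h3]
        ring
    · -- m = n, m' ≠ n'
      by_cases h3 : m' = m
      · subst h3
        -- (s_m' w_m') * (s_m' w_n') = (sign^2 * x) at m' times id at n', m' ≠ n'
        rw [show (fun ω => (Real.sign (w ω m') * w ω m') * (Real.sign (w ω m') * w ω n'))
            = fun ω => (Real.sign (w ω m') ^ 2 * w ω m') * w ω n' from funext fun ω => by ring]
        have key : ∫ ω, (Real.sign (w ω m') ^ 2 * w ω m') * w ω n'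
            = (∫ ω, Real.sign (w ω m') ^ 2 * w ω m') * ∫ ω, w ω n' :=
          int2' hindep h2 msg2x mid (Is2w m') (Iw n')
        rw [key, Es2w m', Ew n']
        simp [dd, h2, Ne.symm h2]
      · by_cases h4 : n' = m
        · subst h4
          -- (s_n' w_n') * (s_m' w_n') = (sign * x^2) at n' times sign at m'
          rw [show (fun ω => (Real.sign (w ω n') * w ω n') * (Real.sign (w ω m') * w ω n'))
              = fun ω => (Real.sign (w ω n') * (w ω n') ^ 2) * Real.sign (w ω m')
              from funext fun ω => by ring]
          have key : ∫ ω, (Real.sign (w ω n') * (w ω n') ^ 2) * Real.sign (w ω m')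
              = (∫ ω, Real.sign (w ω n') * (w ω n') ^ 2) * ∫ ω, Real.sign (w ω m') :=
            int2' hindep (Ne.symm h3) msgx2 msg (Isw2 n') (Isg m')
          rw [key, Esw2 n', Esg m']
          simp [dd, h2, h3, Ne.symm h3]
        · -- coords m, m', n' distinct
          rw [show (fun ω => (Real.sign (w ω m) * w ω m) * (Real.sign (w ω m') * w ω n'))
              = fun ω => (Real.sign (w ω m) * w ω m) * Real.sign (w ω m') * w ω n'
              from funext fun ω => by ring]
          have key : ∫ ω, (Real.sign (w ω m) * w ω m) * Real.sign (w ω m') * w ω n'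
              = (∫ ω, Real.sign (w ω m) * w ω m) * (∫ ω, Real.sign (w ω m'))
                * ∫ ω, w ω n' :=
            int3' hmeas hindep (Ne.symm h3) (fun h => h4 h.symm) h2 msgx msg mid
              (Isw m) (Isg m') (Iw n')
          rw [key, Esg m', Ew n']
          simp [dd, h2, h3, h4, Ne.symm h3, Ne.symm h4]
  · -- m ≠ n
    by_cases h2 : m' = n'
    · subst h2
      by_cases h3 : m' = m
      · subst h3
        rw [show (fun ω => (Real.sign (w ω m') * w ω n) * (Real.sign (w ω m') * w ω m'))
            = fun ω => (Real.sign (w ω m') ^ 2 * w ω m') * w ω n from funext fun ω => by ring]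
        have key : ∫ ω, (Real.sign (w ω m') ^ 2 * w ω m') * w ω n
            = (∫ ω, Real.sign (w ω m') ^ 2 * w ω m') * ∫ ω, w ω n :=
          int2' hindep h1 msg2x mid (Is2w m') (Iw n)
        rw [key, Es2w m', Ew n]
        simp [dd, h1, Ne.symm h1]
      · by_cases h4 : m' = n
        · subst h4
          rw [show (fun ω => (Real.sign (w ω m) * w ω m') * (Real.sign (w ω m') * w ω m'))
              = fun ω => Real.sign (w ω m) * (Real.sign (w ω m') * (w ω m') ^ 2)
              from funext fun ω => by ring]
          have key : ∫ ω, Real.sign (w ω m) * (Real.sign (w ω m') * (w ω m') ^ 2)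
              = (∫ ω, Real.sign (w ω m)) * ∫ ω, Real.sign (w ω m') * (w ω m') ^ 2 :=
            int2' hindep h1 msg msgx2 (Isg m) (Isw2 m')
          rw [key, Esg m]
          simp [dd, h1, h3, Ne.symm h1, Ne.symm h3]
        · -- coords m, n, m' distinct
          rw [show (fun ω => (Real.sign (w ω m) * w ω n) * (Real.sign (w ω m') * w ω m'))
              = fun ω => Real.sign (w ω m) * w ω n * (Real.sign (w ω m') * w ω m')
              from funext fun ω => by ring]
          have key : ∫ ω, Real.sign (w ω m) * w ω n * (Real.sign (w ω m') * w ω m')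
              = (∫ ω, Real.sign (w ω m)) * (∫ ω, w ω n)
                * ∫ ω, Real.sign (w ω m') * w ω m' :=
            int3' hmeas hindep h1 (fun h => h3 h.symm) (fun h => h4 h.symm) msg mid msgx
              (Isg m) (Iw n) (Isw m')
          rw [key, Esg m, Ew n]
          simp [dd, h1, h3, h4, Ne.symm h1, Ne.symm h3, Ne.symm h4]
    · -- m ≠ n, m' ≠ n'
      by_cases h3 : m' = m
      · subst h3
        by_cases h4 : n' = n
        · subst h4
          rw [show (fun ω => (Real.sign (w ω m') * w ω n') * (Real.sign (w ω m') * w ω n'))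
              = fun ω => Real.sign (w ω m') ^ 2 * (w ω n') ^ 2 from funext fun ω => by ring]
          have key : ∫ ω, Real.sign (w ω m') ^ 2 * (w ω n') ^ 2
              = (∫ ω, Real.sign (w ω m') ^ 2) * ∫ ω, (w ω n') ^ 2 :=
            int2' hindep h1 msg2 msq (Is2 m') (Iw2 n')
          rw [key, Es2 m', Ew2 n']
          simp [dd, h1, Ne.symm h1]
        · by_cases h5 : n' = m'
          · subst h5
            rw [show (fun ω => (Real.sign (w ω n') * w ω n) * (Real.sign (w ω n') * w ω n'))
                = fun ω => (Real.sign (w ω n') ^ 2 * w ω n') * w ω n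
                from funext fun ω => by ring]
            have key : ∫ ω, (Real.sign (w ω n') ^ 2 * w ω n') * w ω n
                = (∫ ω, Real.sign (w ω n') ^ 2 * w ω n') * ∫ ω, w ω n :=
              int2' hindep h1 msg2x mid (Is2w n') (Iw n)
            rw [key, Es2w n', Ew n]
            simp [dd, h1, h4, Ne.symm h1, Ne.symm h4]
          · -- coords m', n, n' distinct
            rw [show (fun ω => (Real.sign (w ω m') * w ω n) * (Real.sign (w ω m') * w ω n'))
                = fun ω => Real.sign (w ω m') ^ 2 * w ω n * w ω n'
                from funext fun ω => by ring]
            have key : ∫ ω, Real.sign (w ω m') ^ 2 * w ω n * w ω n'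
                = (∫ ω, Real.sign (w ω m') ^ 2) * (∫ ω, w ω n) * ∫ ω, w ω n' :=
              int3' hmeas hindep h1 (fun h => h5 h.symm) (fun h => h4 h.symm) msg2 mid mid
                (Is2 m') (Iw n) (Iw n')
            rw [key, Ew n, Ew n']
            simp [dd, h1, h4, h5, Ne.symm h1, Ne.symm h4, Ne.symm h5]
      · by_cases h4 : m' = n
        · subst h4
          by_cases h5 : n' = m
          · subst h5
            rw [show (fun ω => (Real.sign (w ω n') * w ω m') * (Real.sign (w ω m') * w ω n'))
                = fun ω => (Real.sign (w ω n') * w ω n') * (Real.sign (w ω m') * w ω m')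
                from funext fun ω => by ring]
            have key : ∫ ω, (Real.sign (w ω n') * w ω n') * (Real.sign (w ω m') * w ω m')
                = (∫ ω, Real.sign (w ω n') * w ω n') * ∫ ω, Real.sign (w ω m') * w ω m' :=
              int2' hindep (Ne.symm h3) msgx msgx (Isw n') (Isw m')
            rw [key, Esw n', Esw m']
            simp [dd, h1, h3, Ne.symm h1, Ne.symm h3]
            ring
          · -- coords m, m'(=n), n' distinct ; n' ≠ n since m' ≠ n'
            have h6 : n' ≠ m' := Ne.symm h2
            rw [show (fun ω => (Real.sign (w ω m) * w ω m') * (Real.sign (w ω m') * w ω n'))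
                = fun ω => Real.sign (w ω m) * (Real.sign (w ω m') * w ω m') * w ω n'
                from funext fun ω => by ring]
            have key : ∫ ω, Real.sign (w ω m) * (Real.sign (w ω m') * w ω m') * w ω n'
                = (∫ ω, Real.sign (w ω m)) * (∫ ω, Real.sign (w ω m') * w ω m')
                  * ∫ ω, w ω n' :=
              int3' hmeas hindep h1 (fun h => h5 h.symm) (Ne.symm h6) msg msgx mid
                (Isg m) (Isw m') (Iw n')
            rw [key, Esg m, Ew n']
            simp [dd, h1, h3, h5, h6, Ne.symm h1, Ne.symm h3, Ne.symm h5]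
        · by_cases h5 : n' = m
          · -- coords m, n, m' distinct, n' = m
            subst h5
            rw [show (fun ω => (Real.sign (w ω n') * w ω n) * (Real.sign (w ω m') * w ω n'))
                = fun ω => (Real.sign (w ω n') * w ω n') * w ω n * Real.sign (w ω m')
                from funext fun ω => by ring]
            have key : ∫ ω, (Real.sign (w ω n') * w ω n') * w ω n * Real.sign (w ω m')
                = (∫ ω, Real.sign (w ω n') * w ω n') * (∫ ω, w ω n)
                  * ∫ ω, Real.sign (w ω m') :=
              int3' hmeas hindep h1 (fun h => h3 h.symm) (fun h => h4 h.symm) msgx mid msg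
                (Isw n') (Iw n) (Isg m')
            rw [key, Ew n, Esg m']
            simp [dd, h1, h3, h4, Ne.symm h1, Ne.symm h3, Ne.symm h4]
          · by_cases h6 : n' = n
            · subst h6
              rw [show (fun ω => (Real.sign (w ω m) * w ω n') * (Real.sign (w ω m') * w ω n'))
                  = fun ω => Real.sign (w ω m) * (w ω n') ^ 2 * Real.sign (w ω m')
                  from funext fun ω => by ring]
              have key : ∫ ω, Real.sign (w ω m) * (w ω n') ^ 2 * Real.sign (w ω m')
                  = (∫ ω, Real.sign (w ω m)) * (∫ ω, (w ω n') ^ 2)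
                    * ∫ ω, Real.sign (w ω m') :=
                int3' hmeas hindep h1 (fun h => h3 h.symm) (Ne.symm h2) msg msq msg
                  (Isg m) (Iw2 n') (Isg m')
              rw [key, Esg m, Esg m']
              simp [dd, h1, h3, h4, Ne.symm h1, Ne.symm h3, Ne.symm h4]
            · -- all four distinct
              have key : ∫ ω, Real.sign (w ω m) * w ω n * Real.sign (w ω m') * w ω n'
                  = (∫ ω, Real.sign (w ω m)) * (∫ ω, w ω n) * (∫ ω, Real.sign (w ω m'))
                    * ∫ ω, w ω n' :=
                int4' hmeas hindep h1 (fun h => h3 h.symm) (fun h => h5 h.symm)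
                  (fun h => h4 h.symm) (fun h => h6 h.symm) h2 msg mid msg mid
                  (Isg m) (Iw n) (Isg m') (Iw n')
              rw [show (fun ω => (Real.sign (w ω m) * w ω n) * (Real.sign (w ω m') * w ω n'))
                  = fun ω => Real.sign (w ω m) * w ω n * Real.sign (w ω m') * w ω n'
                  from funext fun ω => by ring]
              rw [key, Esg m, Ew n]
              simp [dd, h1, h3, h4, h5, h6, Ne.symm h1, Ne.symm h3, Ne.symm h4, Ne.symm h5,
                Ne.symm h6]

end CrossMoment

set_option maxHeartbeats 2000000 in
/-- With `Z_K = ∑_k (sign(w)^T ψ_k)(ψ_k^T w)` as in Statement 3, Chebyshev's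
inequality gives `P(|Z_K/K − μ| ≤ δ) ≥ 1 − (σ² + μ²)/(K δ²)` for every `δ > 0`, and hence the
semi-white box distortion `Δ_SW = ε|Z_K|` satisfies
`P(|Δ_SW/K − εμ| ≤ εδ) ≥ 1 − (σ² + μ²)/(K δ²)`. -/
theorem stmt_4 {Ω : Type*} [MeasureSpace Ω] [IsProbabilityMeasure (ℙ : Measure Ω)]
    {N K : ℕ} (hK : 0 < K) (ψ : Fin K → Fin N → ℝ)
    (horth : ∀ i j, ∑ m, ψ i m * ψ j m = if i = j then (1 : ℝ) else 0)
    (w : Ω → Fin N → ℝ)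
    (hmeas : ∀ i, Measurable fun ω => w ω i)
    (hindep : iIndepFun (fun i ω => w ω i) ℙ)
    (W : Ω → ℝ) (hWmeas : Measurable W)
    (hident : ∀ i, IdentDistrib (fun ω => w ω i) W ℙ ℙ)
    (hL2 : Integrable (fun ω => (W ω) ^ 2) ℙ)
    (hmean : ∫ ω, W ω = 0)
    (hmedian : ∫ ω, Real.sign (W ω) = 0)
    (μ σ : ℝ) (hμ : μ = ∫ ω, |W ω|) (hσ : σ ^ 2 = ∫ ω, (W ω) ^ 2)
    (ε : ℝ) (hε : 0 ≤ ε)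
    (Z : Ω → ℝ)
    (hZ : ∀ ω, Z ω = ∑ k,
      (∑ m, Real.sign (w ω m) * ψ k m) * (∑ m, ψ k m * w ω m))
    (Δ : Ω → ℝ) (hΔ : ∀ ω, Δ ω = ε * |Z ω|) :
    ∀ δ > 0,
      1 - (σ ^ 2 + μ ^ 2) / (K * δ ^ 2) ≤ (ℙ {ω | |Z ω / K - μ| ≤ δ}).toReal ∧
      1 - (σ ^ 2 + μ ^ 2) / (K * δ ^ 2) ≤ (ℙ {ω | |Δ ω / K - ε * μ| ≤ ε * δ}).toReal := by
  have msg : Measurable Real.sign := sign_measurable'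
  have msgx : Measurable fun x : ℝ => Real.sign x * x := msg.mul measurable_id
  have msg2 : Measurable fun x : ℝ => Real.sign x ^ 2 := msg.pow_const 2
  have msg2x : Measurable fun x : ℝ => Real.sign x ^ 2 * x := msg2.mul measurable_id
  have msgx2 : Measurable fun x : ℝ => Real.sign x * x ^ 2 := msg.mul (measurable_id.pow_const 2)
  have msq : Measurable fun x : ℝ => x ^ 2 := measurable_id.pow_const 2
  have mid : Measurable fun x : ℝ => x := measurable_id
  have hWaesm : AEStronglyMeasurable W ℙ := hWmeas.aestronglyMeasurable
  have hKpos : (0:ℝ) < (K:ℝ) := by exact_mod_cast hK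
  have hμ0 : 0 ≤ μ := hμ ▸ integral_nonneg fun ω => abs_nonneg _
  have hσ0 : 0 ≤ σ ^ 2 := hσ ▸ integral_nonneg fun ω => sq_nonneg _
  -- W-side integrability
  have intW : Integrable W ℙ := by
    refine (hL2.add (integrable_const 1)).mono' hWaesm (ae_of_all _ fun ω => ?_)
    simp only [Pi.add_apply]
    rw [Real.norm_eq_abs]
    nlinarith [sq_nonneg (|W ω| - 1), sq_abs (W ω), abs_nonneg (W ω)]
  have iWsg : Integrable (fun ω => Real.sign (W ω)) ℙ := by
    refine (integrable_const (1:ℝ)).mono' (msg.comp hWmeas).aestronglyMeasurable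
      (ae_of_all _ fun ω => ?_)
    simpa [Real.norm_eq_abs] using abs_sign_le_one' (W ω)
  have iWsgx : Integrable (fun ω => Real.sign (W ω) * W ω) ℙ := by
    refine intW.abs.mono' (msgx.comp hWmeas).aestronglyMeasurable (ae_of_all _ fun ω => ?_)
    rw [Real.norm_eq_abs, sign_mul_self', abs_abs]
  have iWsg2 : Integrable (fun ω => Real.sign (W ω) ^ 2) ℙ := by
    refine (integrable_const (1:ℝ)).mono' (msg2.comp hWmeas).aestronglyMeasurable
      (ae_of_all _ fun ω => ?_)
    rw [Real.norm_eq_abs, abs_of_nonneg (sq_nonneg _)]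
    exact sign_sq_le_one' _
  have iWsg2x : Integrable (fun ω => Real.sign (W ω) ^ 2 * W ω) ℙ := by
    rw [show (fun ω => Real.sign (W ω) ^ 2 * W ω) = W from funext fun ω => sign_sq_mul_self' _]
    exact intW
  have iWsgx2 : Integrable (fun ω => Real.sign (W ω) * W ω ^ 2) ℙ := by
    refine hL2.mono' (msgx2.comp hWmeas).aestronglyMeasurable (ae_of_all _ fun ω => ?_)
    rw [Real.norm_eq_abs, abs_mul]
    nlinarith [abs_sign_le_one' (W ω), abs_nonneg (Real.sign (W ω)), abs_nonneg (W ω ^ 2),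
      abs_of_nonneg (sq_nonneg (W ω))]
  -- W-side moment values
  set q : ℝ := ∫ ω, Real.sign (W ω) ^ 2 with hqdef
  set ν : ℝ := ∫ ω, Real.sign (W ω) * W ω ^ 2 with hνdef
  have hq0 : 0 ≤ q := integral_nonneg fun ω => sq_nonneg _
  have hq1 : q ≤ 1 := by
    have := integral_mono iWsg2 (integrable_const 1) fun ω => sign_sq_le_one' (W ω)
    simpa using this
  have vsgx : ∫ ω, Real.sign (W ω) * W ω = μ := by
    rw [show (fun ω => Real.sign (W ω) * W ω) = fun ω => |W ω| from
      funext fun ω => sign_mul_self' _]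
    exact hμ.symm
  have vsg2x : ∫ ω, Real.sign (W ω) ^ 2 * W ω = 0 := by
    rw [show (fun ω => Real.sign (W ω) ^ 2 * W ω) = W from funext fun ω => sign_sq_mul_self' _]
    exact hmean
  have vsg2sq : ∫ ω, Real.sign (W ω) ^ 2 * W ω ^ 2 = σ ^ 2 := by
    rw [show (fun ω => Real.sign (W ω) ^ 2 * W ω ^ 2) = fun ω => W ω ^ 2 from
      funext fun ω => sign_sq_mul_sq' _]
    exact hσ.symm
  -- transfer to coordinates
  have trE : ∀ f : ℝ → ℝ, Measurable f → ∀ i : Fin N,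
      ∫ ω, f (w ω i) = ∫ ω, f (W ω) := fun f hf i => ((hident i).comp hf).integral_eq
  have trI : ∀ f : ℝ → ℝ, Measurable f → ∀ i : Fin N,
      Integrable (fun ω => f (W ω)) ℙ → Integrable (fun ω => f (w ω i)) ℙ :=
    fun f hf i h => (((hident i).comp hf).integrable_iff).2 h
  have Esg : ∀ i, ∫ ω, Real.sign (w ω i) = 0 := fun i => (trE Real.sign msg i).trans hmedian
  have Ew : ∀ i, ∫ ω, w ω i = 0 := fun i => (trE (fun x => x) mid i).trans hmean
  have Esw : ∀ i, ∫ ω, Real.sign (w ω i) * w ω i = μ := fun i =>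
    (trE (fun x => Real.sign x * x) msgx i).trans vsgx
  have Ew2 : ∀ i, ∫ ω, (w ω i) ^ 2 = σ ^ 2 := fun i =>
    (trE (fun x => x ^ 2) msq i).trans hσ.symm
  have Es2w : ∀ i, ∫ ω, Real.sign (w ω i) ^ 2 * w ω i = 0 := fun i =>
    (trE (fun x => Real.sign x ^ 2 * x) msg2x i).trans vsg2x
  have Es2 : ∀ i, ∫ ω, Real.sign (w ω i) ^ 2 = q := fun i =>
    (trE (fun x => Real.sign x ^ 2) msg2 i)
  have Es2w2 : ∀ i, ∫ ω, Real.sign (w ω i) ^ 2 * (w ω i) ^ 2 = σ ^ 2 := fun i =>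
    (trE (fun x => Real.sign x ^ 2 * x ^ 2) (msg2.mul msq) i).trans vsg2sq
  have Esw2 : ∀ i, ∫ ω, Real.sign (w ω i) * (w ω i) ^ 2 = ν := fun i =>
    (trE (fun x => Real.sign x * x ^ 2) msgx2 i)
  have Isg : ∀ i, Integrable (fun ω => Real.sign (w ω i)) ℙ := fun i =>
    trI Real.sign msg i iWsg
  have Iwc : ∀ i, Integrable (fun ω => w ω i) ℙ := fun i => trI (fun x => x) mid i intW
  have Isw : ∀ i, Integrable (fun ω => Real.sign (w ω i) * w ω i) ℙ := fun i =>
    trI (fun x => Real.sign x * x) msgx i iWsgx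
  have Iw2 : ∀ i, Integrable (fun ω => (w ω i) ^ 2) ℙ := fun i =>
    trI (fun x => x ^ 2) msq i hL2
  have Is2w : ∀ i, Integrable (fun ω => Real.sign (w ω i) ^ 2 * w ω i) ℙ := fun i =>
    trI (fun x => Real.sign x ^ 2 * x) msg2x i iWsg2x
  have Is2 : ∀ i, Integrable (fun ω => Real.sign (w ω i) ^ 2) ℙ := fun i =>
    trI (fun x => Real.sign x ^ 2) msg2 i iWsg2
  have Isw2 : ∀ i, Integrable (fun ω => Real.sign (w ω i) * (w ω i) ^ 2) ℙ := fun i =>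
    trI (fun x => Real.sign x * x ^ 2) msgx2 i iWsgx2
  -- cross moments
  have CM := cross_moment hmeas hindep μ (σ ^ 2) q ν Esg Ew Esw Ew2 Es2w Es2 Es2w2 Esw2
    Isg Iwc Isw Iw2 Is2w Is2 Isw2
  -- the matrix P
  have hPtr : ∑ m, Pmat ψ m m = (K:ℝ) := Pmat_trace ψ horth
  have hPsq : ∀ m, ∑ n, Pmat ψ m n ^ 2 = Pmat ψ m m := by
    intro m
    rw [show (fun n => Pmat ψ m n ^ 2) = fun n => Pmat ψ m n * Pmat ψ n m from
      funext fun n => by rw [Pmat_symm ψ n m]; ring]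
    exact Pmat_proj ψ horth m m
  have hA0 : 0 ≤ ∑ m, Pmat ψ m m ^ 2 :=
    Finset.sum_nonneg fun m _ => sq_nonneg _
  have hAK : ∑ m, Pmat ψ m m ^ 2 ≤ (K:ℝ) := by
    rw [← hPtr]
    refine Finset.sum_le_sum fun m _ => ?_
    nlinarith [Pmat_diag_nonneg ψ m, Pmat_diag_le_one ψ horth m]
  set A : ℝ := ∑ m, Pmat ψ m m ^ 2 with hAdef
  -- rewritten Z
  have hZ' : ∀ ω, Z ω = ∑ m, ∑ n, Pmat ψ m n * (Real.sign (w ω m) * w ω n) := by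
    intro ω
    rw [hZ ω, zk_reshape ψ (fun m => Real.sign (w ω m)) (w ω)]
    rfl
  -- integrability of coordinate products
  have iww : ∀ n n', Integrable (fun ω => w ω n * w ω n') ℙ := by
    intro n n'
    by_cases h : n = n'
    · subst h
      rw [show (fun ω => w ω n * w ω n) = fun ω => (w ω n) ^ 2 from funext fun ω => (sq _).symm]
      exact Iw2 n
    · exact (hindep.indepFun h).integrable_mul (Iwc n) (Iwc n')
  have iterm : ∀ m n m' n', Integrable
      (fun ω => (Real.sign (w ω m) * w ω n) * (Real.sign (w ω m') * w ω n')) ℙ := by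
    intro m n m' n'
    refine (iww n n').abs.mono'
      ((((msg.comp (hmeas m)).mul (hmeas n)).mul
        ((msg.comp (hmeas m')).mul (hmeas n'))).aestronglyMeasurable)
      (ae_of_all _ fun ω => ?_)
    rw [Real.norm_eq_abs, abs_mul, abs_mul, abs_mul]
    calc |Real.sign (w ω m)| * |w ω n| * (|Real.sign (w ω m')| * |w ω n'|)
        ≤ 1 * |w ω n| * (1 * |w ω n'|) := by gcongr <;> exact abs_sign_le_one' _
      _ = |w ω n * w ω n'| := by rw [abs_mul]; ring
  have isw : ∀ m n, Integrable (fun ω => Real.sign (w ω m) * w ω n) ℙ := by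
    intro m n
    refine (Iwc n).abs.mono' ((msg.comp (hmeas m)).mul (hmeas n)).aestronglyMeasurable
      (ae_of_all _ fun ω => ?_)
    rw [Real.norm_eq_abs, abs_mul]
    calc |Real.sign (w ω m)| * |w ω n| ≤ 1 * |w ω n| := by
          gcongr
          exact abs_sign_le_one' _
      _ = |w ω n| := by ring
  -- mean of Z
  have EZval : ∫ ω, Z ω = (K:ℝ) * μ := by
    rw [show (fun ω => Z ω) = fun ω => ∑ m, ∑ n, Pmat ψ m n * (Real.sign (w ω m) * w ω n)
      from funext hZ']
    rw [integral_finset_sum _ fun m _ =>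
      integrable_finset_sum _ fun n _ => (isw m n).const_mul (Pmat ψ m n)]
    have : ∀ m : Fin N, ∫ ω, ∑ n, Pmat ψ m n * (Real.sign (w ω m) * w ω n)
        = ∑ n, Pmat ψ m n * ∫ ω, Real.sign (w ω m) * w ω n := by
      intro m
      rw [integral_finset_sum _ fun n _ => (isw m n).const_mul (Pmat ψ m n)]
      exact Finset.sum_congr rfl fun n _ => integral_const_mul _ _
    rw [Finset.sum_congr rfl fun m _ => this m]
    have hval : ∀ m n, ∫ ω, Real.sign (w ω m) * w ω n = if m = n then μ else 0 := by
      intro m n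
      by_cases h : m = n
      · subst h; rw [if_pos rfl]; exact Esw m
      · rw [if_neg h]
        have key : ∫ ω, Real.sign (w ω m) * w ω n
            = (∫ ω, Real.sign (w ω m)) * ∫ ω, w ω n :=
          int2' hindep h msg mid (Isg m) (Iwc n)
        rw [key, Esg m, zero_mul]
    simp_rw [hval, mul_ite, mul_zero]
    rw [Finset.sum_congr rfl fun m (_ : m ∈ Finset.univ) => Finset.sum_ite_eq Finset.univ m
      (fun n => Pmat ψ m n * μ)]
    simp only [Finset.mem_univ, if_true]
    rw [← Finset.sum_mul, hPtr]
  -- second moment of Z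
  have inner : ∀ m n m' n', ∫ ω, (Pmat ψ m n * (Real.sign (w ω m) * w ω n))
        * (Pmat ψ m' n' * (Real.sign (w ω m') * w ω n'))
      = (Pmat ψ m n * Pmat ψ m' n') *
          (σ ^ 2 * dd m n * dd m m' * dd m' n'
            + μ ^ 2 * (dd m n * dd m' n' * (1 - dd m m'))
            + q * σ ^ 2 * (dd m m' * dd n n' * (1 - dd m n))
            + μ ^ 2 * (dd m n' * dd n m' * (1 - dd m n))) := by
    intro m n m' n'
    rw [show (fun ω => (Pmat ψ m n * (Real.sign (w ω m) * w ω n))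
          * (Pmat ψ m' n' * (Real.sign (w ω m') * w ω n')))
        = fun ω => (Pmat ψ m n * Pmat ψ m' n') *
            ((Real.sign (w ω m) * w ω n) * (Real.sign (w ω m') * w ω n'))
        from funext fun ω => by ring]
    rw [integral_const_mul, CM m n m' n']
  have itermc : ∀ m n m' n', Integrable (fun ω => (Pmat ψ m n * (Real.sign (w ω m) * w ω n))
      * (Pmat ψ m' n' * (Real.sign (w ω m') * w ω n'))) ℙ := by
    intro m n m' n'
    have := (iterm m n m' n').const_mul (Pmat ψ m n * Pmat ψ m' n')
    exact this.congr (ae_of_all _ fun ω => by ring)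
  have EZ2val : ∫ ω, Z ω ^ 2
      = σ ^ 2 * A + μ ^ 2 * ((K:ℝ) ^ 2 - A) + q * σ ^ 2 * ((K:ℝ) - A)
        + μ ^ 2 * ((K:ℝ) - A) := by
    have hZsq : (fun ω => Z ω ^ 2) = fun ω => ∑ m, ∑ n, ∑ m', ∑ n',
        (Pmat ψ m n * (Real.sign (w ω m) * w ω n))
          * (Pmat ψ m' n' * (Real.sign (w ω m') * w ω n')) := by
      funext ω
      rw [hZ' ω, sq_double_sum]
    rw [hZsq]
    rw [integral_finset_sum _ fun m _ => integrable_finset_sum _ fun n _ =>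
      integrable_finset_sum _ fun m' _ => integrable_finset_sum _ fun n' _ =>
        itermc m n m' n']
    have step : ∀ m : Fin N, ∫ ω, ∑ n, ∑ m', ∑ n',
        (Pmat ψ m n * (Real.sign (w ω m) * w ω n))
          * (Pmat ψ m' n' * (Real.sign (w ω m') * w ω n'))
        = ∑ n, ∑ m', ∑ n', (Pmat ψ m n * Pmat ψ m' n') *
            (σ ^ 2 * dd m n * dd m m' * dd m' n'
              + μ ^ 2 * (dd m n * dd m' n' * (1 - dd m m'))
              + q * σ ^ 2 * (dd m m' * dd n n' * (1 - dd m n))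
              + μ ^ 2 * (dd m n' * dd n m' * (1 - dd m n))) := by
      intro m
      rw [integral_finset_sum _ fun n _ => integrable_finset_sum _ fun m' _ =>
        integrable_finset_sum _ fun n' _ => itermc m n m' n']
      refine Finset.sum_congr rfl fun n _ => ?_
      rw [integral_finset_sum _ fun m' _ => integrable_finset_sum _ fun n' _ =>
        itermc m n m' n']
      refine Finset.sum_congr rfl fun m' _ => ?_
      rw [integral_finset_sum _ fun n' _ => itermc m n m' n']
      exact Finset.sum_congr rfl fun n' _ => inner m n m' n'
    rw [Finset.sum_congr rfl fun m _ => step m]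
    simp only [mul_add, Finset.sum_add_distrib]
    rw [collapse1 (Pmat ψ) (σ ^ 2), collapse2 (Pmat ψ) (μ ^ 2),
      collapse3 (Pmat ψ) (q * σ ^ 2), collapse4 (Pmat ψ) (μ ^ 2)]
    have hS : ∑ m, ∑ n, Pmat ψ m n ^ 2 = (K:ℝ) := by
      rw [Finset.sum_congr rfl fun m (_ : m ∈ Finset.univ) => hPsq m]; exact hPtr
    have hS' : ∑ m, ∑ n, Pmat ψ m n * Pmat ψ n m = (K:ℝ) := by
      rw [Finset.sum_congr rfl fun m (_ : m ∈ Finset.univ) => Pmat_proj ψ horth m m]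
      exact hPtr
    rw [hPtr, hS, hS', ← hAdef]
  -- Z is L²
  have hwn2 : ∀ n, MemLp (fun ω => w ω n) 2 ℙ := fun n =>
    ((hident n).memLp_iff).2 ((memLp_two_iff_integrable_sq hWaesm).2 hL2)
  have hZL2 : MemLp Z 2 ℙ := by
    rw [show Z = fun ω => ∑ m, ∑ n, Pmat ψ m n * (Real.sign (w ω m) * w ω n)
      from funext hZ']
    refine memLp_finset_sum _ fun m _ => memLp_finset_sum _ fun n _ => ?_
    refine MemLp.of_le ((hwn2 n).const_mul (Pmat ψ m n))
      ((measurable_const.mul ((msg.comp (hmeas m)).mul (hmeas n))).aestronglyMeasurable)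
      (ae_of_all _ fun ω => ?_)
    rw [Real.norm_eq_abs, Real.norm_eq_abs, abs_mul, abs_mul, abs_mul]
    calc |Pmat ψ m n| * (|Real.sign (w ω m)| * |w ω n|)
        ≤ |Pmat ψ m n| * (1 * |w ω n|) := by
          gcongr
          exact abs_sign_le_one' _
      _ = |Pmat ψ m n| * |w ω n| := by ring
  -- variance bound
  have hVar : variance Z ℙ ≤ (K:ℝ) * (σ ^ 2 + μ ^ 2) := by
    rw [variance_eq_sub hZL2]
    have e1 : (ℙ : Measure Ω)[Z ^ 2] = ∫ ω, Z ω ^ 2 := rfl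
    have e2 : (ℙ : Measure Ω)[Z] = ∫ ω, Z ω := rfl
    rw [e1, e2, EZ2val, EZval]
    have h₁ : 0 ≤ (1 - q) * σ ^ 2 * ((K:ℝ) - A) :=
      mul_nonneg (mul_nonneg (by linarith) hσ0) (by linarith)
    have h₂ : 0 ≤ μ ^ 2 * A := mul_nonneg (sq_nonneg μ) hA0
    nlinarith
  -- measurability of Z
  have hmZ : Measurable Z := by
    rw [show Z = fun ω => ∑ m, ∑ n, Pmat ψ m n * (Real.sign (w ω m) * w ω n)
      from funext hZ']
    exact Finset.measurable_sum _ fun m _ => Finset.measurable_sum _ fun n _ =>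
      measurable_const.mul ((msg.comp (hmeas m)).mul (hmeas n))
  -- Chebyshev
  intro δ hδ
  have hδK : (0:ℝ) < (K:ℝ) * δ := by positivity
  have cheb := meas_ge_le_variance_div_sq (X := Z) hZL2 hδK
  have hmean' : (ℙ : Measure Ω)[Z] = (K:ℝ) * μ := EZval
  rw [hmean'] at cheb
  set r : ℝ := (σ ^ 2 + μ ^ 2) / ((K:ℝ) * δ ^ 2) with hrdef
  have hr0 : 0 ≤ r := by positivity
  have hBr : (ℙ {ω | (K:ℝ) * δ ≤ |Z ω - (K:ℝ) * μ|}).toReal ≤ r := by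
    have h1 := ENNReal.toReal_mono ENNReal.ofReal_ne_top cheb
    have h2 : (ENNReal.ofReal (variance Z ℙ / ((K:ℝ) * δ) ^ 2)).toReal
        = variance Z ℙ / ((K:ℝ) * δ) ^ 2 :=
      ENNReal.toReal_ofReal (div_nonneg (variance_nonneg _ _) (sq_nonneg _))
    rw [h2] at h1
    have h3 : variance Z ℙ / ((K:ℝ) * δ) ^ 2 ≤ r := by
      rw [hrdef, div_le_div_iff₀ (by positivity) (by positivity)]
      nlinarith [mul_le_mul_of_nonneg_right hVar (le_of_lt (show (0:ℝ) < (K:ℝ) * δ ^ 2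
        by positivity))]
    linarith
  have hGm : MeasurableSet {ω | |Z ω / (K:ℝ) - μ| ≤ δ} :=
    measurableSet_le (((hmZ.div_const _).sub measurable_const).abs) measurable_const
  have hsub : {ω | |Z ω / (K:ℝ) - μ| ≤ δ}ᶜ ⊆ {ω | (K:ℝ) * δ ≤ |Z ω - (K:ℝ) * μ|} := by
    intro ω hω
    simp only [Set.mem_compl_iff, Set.mem_setOf_eq, not_le] at hω
    simp only [Set.mem_setOf_eq]
    have heq : |Z ω - (K:ℝ) * μ| = (K:ℝ) * |Z ω / (K:ℝ) - μ| := by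
      rw [← abs_of_pos hKpos, ← abs_mul]
      congr 1
      field_simp
      rw [abs_of_pos hKpos]; ring
    rw [heq]
    nlinarith
  have hcompl := prob_add_prob_compl (μ := ℙ) hGm
  have htot : (ℙ {ω | |Z ω / (K:ℝ) - μ| ≤ δ}).toReal
      + (ℙ {ω | |Z ω / (K:ℝ) - μ| ≤ δ}ᶜ).toReal = 1 := by
    have := congrArg ENNReal.toReal hcompl
    rwa [ENNReal.toReal_add (measure_ne_top ℙ _) (measure_ne_top ℙ _), ENNReal.toReal_one]
      at this
  have hGc : (ℙ {ω | |Z ω / (K:ℝ) - μ| ≤ δ}ᶜ).toReal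
      ≤ (ℙ {ω | (K:ℝ) * δ ≤ |Z ω - (K:ℝ) * μ|}).toReal :=
    ENNReal.toReal_mono (measure_ne_top ℙ _) (measure_mono hsub)
  have hfirst : 1 - r ≤ (ℙ {ω | |Z ω / (K:ℝ) - μ| ≤ δ}).toReal := by linarith
  constructor
  · exact hfirst
  · have hsub2 : {ω | |Z ω / (K:ℝ) - μ| ≤ δ} ⊆ {ω | |Δ ω / (K:ℝ) - ε * μ| ≤ ε * δ} := by
      intro ω hω
      simp only [Set.mem_setOf_eq] at hω ⊢
      rw [hΔ ω]
      have heq : ε * |Z ω| / (K:ℝ) - ε * μ = ε * (|Z ω| / (K:ℝ) - μ) := by ring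
      rw [heq, abs_mul, abs_of_nonneg hε]
      refine mul_le_mul_of_nonneg_left ?_ hε
      have h2 : abs (abs (Z ω) / (K:ℝ) - μ) ≤ abs (Z ω / (K:ℝ) - μ) := by
        rw [show abs (Z ω) / (K:ℝ) = abs (Z ω / (K:ℝ)) by rw [abs_div, abs_of_pos hKpos]]
        calc abs (abs (Z ω / (K:ℝ)) - μ) = abs (abs (Z ω / (K:ℝ)) - abs μ) := by
              rw [abs_of_nonneg hμ0]
          _ ≤ abs (Z ω / (K:ℝ) - μ) := abs_abs_sub_abs_le_abs_sub _ _
      exact h2.trans hω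
    have := ENNReal.toReal_mono (measure_ne_top ℙ _) (measure_mono hsub2)
    linarith
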